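/- Let p be a prime, n ≥ 0 an integer, and f ∈ ℤ_p[[X]]. Suppose x_0, x_1, ..., x_{p-1} ∈ ℤ_p[[X]] satisfy X^n · f = Σ_{i=0}^{p-1} (1+X)^i · x_i((1+X)^p - 1). Then x_0 belongs to the ideal of ℤ_p[[X]] generated by the elements X^j · p^[(n-1-jp)/(p-1)] for 0 ≤ j ≤ [n/p]. -/

import Mathlib

open PowerSeries
open scoped Matrix

/-!
Let `Φ(x) = ∑ᵢ (1 + X)ⁱ xᵢ((1 + X)ᵖ - 1)`. Modulo `p` we have `(1 + X)ᵖ - 1 ≡ Xᵖ`, and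
`x ↦ ∑ᵢ (1 + X)ⁱ xᵢ(Xᵖ)` is bijective because `(1 + X)ⁱ` and `Xʳ` differ by a unitriangular
binomial matrix; since `ℤ_p[[X]]` is `p`-adically complete, separated and `p`-torsion free,
`Φ` itself is bijective. Writing `(1 + X)ᵖ - 1 = Xᵖ + pXu`, we get
`X^{m+p} f = ((1 + X)ᵖ - 1) X^m f - p X^{m+1} u f`, so injectivity of `Φ` gives
`Φ⁻¹(X^{m+p} f) = X Φ⁻¹(X^m f) - p Φ⁻¹(X^{m+1} u f)`. Induction on `n`, with
`X I_m ⊆ I_{m+p}` and `p I_{m+1} ⊆ I_{m+p}` for the ideals `I_n` of the statement,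
then puts the `0`-th component in `I_n`.
-/

/-- Substitution of a power series `g` with zero constant term into a power series `f`:
the coefficient of `X^d` in `f(g)` is `∑_{n ≤ d} (coeff n f) · (coeff d g^n)`.
(When the constant term of `g` vanishes, `coeff d (g^n) = 0` for `n > d`, so this is
the usual substitution `f ↦ f(g)`.) -/
noncomputable def PowerSeries.subst' {R : Type*} [CommRing R] (g f : R⟦X⟧) : R⟦X⟧ :=
  PowerSeries.mk fun d => ∑ n ∈ Finset.range (d + 1), coeff n f * coeff d (g ^ n)

section Adic

variable {R : Type*} [CommRing R] {π : R}

theorem mem_ideal_span_singleton_smul_top {M : Type*} [AddCommGroup M] [Module R M] {x : M} :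
    x ∈ Ideal.span {π} • (⊤ : Submodule R M) ↔ ∃ y, π • y = x := by
  rw [Submodule.ideal_span_singleton_smul, Submodule.mem_smul_pointwise_iff_exists]
  simp

theorem smodEq_ideal_span_singleton_pow_iff {M : Type*} [AddCommGroup M] [Module R M] {n : ℕ}
    {x y : M} :
    x ≡ y [SMOD Ideal.span {π} ^ n • (⊤ : Submodule R M)] ↔ ∃ z, π ^ n • z = x - y := by
  rw [SModEq.sub_mem, Ideal.span_singleton_pow, mem_ideal_span_singleton_smul_top]

section Pi

variable {ι : Type*} {M : ι → Type*} [∀ i, AddCommGroup (M i)] [∀ i, Module R (M i)]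

instance IsHausdorff.pi_span_singleton [∀ i, IsHausdorff (Ideal.span {π}) (M i)] :
    IsHausdorff (Ideal.span {π}) (∀ i, M i) where
  haus' x hx := _root_.funext fun i ↦ IsHausdorff.haus' (I := Ideal.span {π}) (x i) fun n ↦ by
    obtain ⟨z, hz⟩ := smodEq_ideal_span_singleton_pow_iff.mp (hx n)
    exact smodEq_ideal_span_singleton_pow_iff.mpr ⟨z i, congrFun hz i⟩

instance IsPrecomplete.pi_span_singleton [∀ i, IsPrecomplete (Ideal.span {π}) (M i)] :
    IsPrecomplete (Ideal.span {π}) (∀ i, M i) where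
  prec' f hf := by
    have hlim (i : ι) : ∃ L : M i, ∀ n,
        f n i ≡ L [SMOD Ideal.span {π} ^ n • (⊤ : Submodule R (M i))] :=
      IsPrecomplete.prec' (I := Ideal.span {π}) (fun n ↦ f n i) fun hmn ↦ by
        obtain ⟨z, hz⟩ := smodEq_ideal_span_singleton_pow_iff.mp (hf hmn)
        exact smodEq_ideal_span_singleton_pow_iff.mpr ⟨z i, congrFun hz i⟩
    choose L hL using hlim
    refine ⟨L, fun n ↦ smodEq_ideal_span_singleton_pow_iff.mpr ?_⟩
    choose z hz using fun i ↦ smodEq_ideal_span_singleton_pow_iff.mp (hL i n)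
    exact ⟨z, funext hz⟩

end Pi

-- As an `R`-module, `R⟦X⟧` is the product `(Unit →₀ ℕ) → R`.
instance PowerSeries.isHausdorff_span_singleton [IsHausdorff (Ideal.span {π}) R] :
    IsHausdorff (Ideal.span {π}) R⟦X⟧ :=
  inferInstanceAs (IsHausdorff _ ((Unit →₀ ℕ) → R))

instance PowerSeries.isPrecomplete_span_singleton [IsPrecomplete (Ideal.span {π}) R] :
    IsPrecomplete (Ideal.span {π}) R⟦X⟧ :=
  inferInstanceAs (IsPrecomplete _ ((Unit →₀ ℕ) → R))

namespace LinearMap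

variable {M N : Type*} [AddCommGroup M] [Module R M] [AddCommGroup N] [Module R N]
  {f e : M →ₗ[R] N}

theorem surjective_of_sub_eq_smul [IsPrecomplete (Ideal.span {π}) M]
    [IsHausdorff (Ideal.span {π}) N] (he : Function.Surjective e)
    (hfe : ∀ x, ∃ y, π • y = f x - e x) : Function.Surjective f := by
  refine surjective_of_mkQ_comp_surjective (I := Ideal.span {π}) fun q ↦ ?_
  obtain ⟨y, rfl⟩ := Submodule.mkQ_surjective _ q
  obtain ⟨x, rfl⟩ := he y
  exact ⟨x, (Submodule.Quotient.eq _).mpr (mem_ideal_span_singleton_smul_top.mpr (hfe x))⟩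

theorem injective_of_sub_eq_smul [IsHausdorff (Ideal.span {π}) M] (hπ : IsSMulRegular N π)
    (he : Function.Bijective e) (hfe : ∀ x, ∃ y, π • y = f x - e x) :
    Function.Injective f := by
  have hdvd (m : ℕ) : ∀ x, f x = 0 → ∃ z, π ^ m • z = x := by
    induction m with
    | zero => exact fun x _ ↦ ⟨x, by rw [pow_zero, one_smul]⟩
    | succ m ih =>
      intro x hx
      obtain ⟨y, hy⟩ := hfe x
      obtain ⟨w, rfl⟩ := he.2 y
      have hxw : x = π • -w := he.1 (by
        rw [map_smul, map_neg, smul_neg, hy, hx, zero_sub, neg_neg])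
      have hfw : f (-w) = 0 :=
        hπ (show π • f (-w) = π • 0 by rw [← map_smul, ← hxw, hx, smul_zero])
      obtain ⟨z, hz⟩ := ih _ hfw
      exact ⟨z, by rw [hxw, ← hz, pow_succ', mul_smul]⟩
  refine (injective_iff_map_eq_zero f).mpr fun x hx ↦
    IsHausdorff.haus' (I := Ideal.span {π}) x fun m ↦ ?_
  obtain ⟨z, hz⟩ := hdvd m x hx
  exact smodEq_ideal_span_singleton_pow_iff.mpr ⟨z, by rw [hz, sub_zero]⟩

end LinearMap

end Adic

namespace PowerSeries

variable {R : Type*} [CommRing R]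

theorem coeff_subst_eq_sum_range {g : R⟦X⟧} (hg : constantCoeff g = 0) (f : R⟦X⟧) (d : ℕ) :
    coeff d (f.subst g) = ∑ m ∈ Finset.range (d + 1), coeff m f * coeff d (g ^ m) := by
  rw [coeff_subst' (HasSubst.of_constantCoeff_zero' hg),
    finsum_eq_sum_of_support_subset (s := Finset.range (d + 1))]
  · rfl
  intro m hm
  by_contra! hdm
  simp only [Finset.coe_range, Set.mem_Iio, Nat.lt_succ_iff, not_le] at hdm
  rw [Function.mem_support, X_pow_dvd_iff.mp (pow_dvd_pow_of_dvd (X_dvd_iff.mpr hg) m) d hdm,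
    smul_zero] at hm
  exact hm rfl

theorem subst'_eq_subst {g : R⟦X⟧} (hg : constantCoeff g = 0) (f : R⟦X⟧) :
    subst' g f = f.subst g := by
  ext d
  rw [coeff_subst_eq_sum_range hg]
  exact coeff_mk _ _

theorem exists_smul_eq_of_map_eq_zero {S : Type*} [CommRing S] {h : R →+* S} {c : R}
    (hker : RingHom.ker h ≤ Ideal.span {c}) {F : R⟦X⟧} (hF : map h F = 0) : ∃ y, c • y = F := by
  have hc (d : ℕ) : c ∣ coeff d F :=
    Ideal.mem_span_singleton.mp (hker (by rw [RingHom.mem_ker, ← coeff_map, hF, map_zero]))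
  choose a ha using hc
  exact ⟨mk a, by ext d; simp [ha]⟩

theorem coeff_X_pow_mul_subst_X_pow {n a r : ℕ} (ha : a < n) (hr : r < n) (y : R⟦X⟧) (k : ℕ) :
    coeff (n * k + r) (X ^ a * y.subst (X ^ n : R⟦X⟧)) = if a = r then coeff k y else 0 := by
  rw [coeff_X_pow_mul', coeff_subst_X_pow (by omega), Algebra.algebraMap_self, RingHom.id_apply]
  by_cases har : a = r
  · subst har
    simp [Nat.mul_div_cancel_left k (by omega : 0 < n)]
  rw [if_neg har]
  split_ifs with hle hdvd <;> try rfl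
  obtain ⟨m, hm⟩ := hdvd
  have hmod : (n * k + r) % n = (n * m + a) % n := by rw [← hm, Nat.sub_add_cancel hle]
  rw [Nat.mul_add_mod, Nat.mul_add_mod, Nat.mod_eq_of_lt ha, Nat.mod_eq_of_lt hr] at hmod
  exact absurd hmod.symm har

theorem coeff_coe_mul_subst_X_pow {n r : ℕ} {P : Polynomial R} (hP : P.natDegree < n)
    (hr : r < n) (y : R⟦X⟧) (k : ℕ) :
    coeff (n * k + r) ((P : R⟦X⟧) * y.subst (X ^ n : R⟦X⟧)) = P.coeff r * coeff k y := by
  conv_lhs => rw [P.as_sum_range_C_mul_X_pow' hP, ← Polynomial.coeToPowerSeries.ringHom_apply]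
  simp only [map_sum, map_mul, map_pow, Polynomial.coeToPowerSeries.ringHom_apply,
    Polynomial.coe_C, Polynomial.coe_X, Finset.sum_mul, mul_assoc, coeff_C_mul]
  rw [Finset.sum_congr rfl fun a ha ↦ by
    rw [coeff_X_pow_mul_subst_X_pow (Finset.mem_range.mp ha) hr, mul_ite, mul_zero]]
  rw [Finset.sum_ite_eq', if_pos (Finset.mem_range.mpr hr)]

variable (n : ℕ) {g : R⟦X⟧}

/-- For `g = (1 + X)^p - 1` this is the inverse of the decomposition
`A⁺ = ⊕_{i<p} (1 + X)ⁱ φ(A⁺)`, whose `0`-th component is `ψ`. -/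
noncomputable def twistedSubst (hg : HasSubst g) : (Fin n → R⟦X⟧) →ₗ[R] R⟦X⟧ :=
  ∑ i : Fin n, LinearMap.mulLeft R ((1 + X : R⟦X⟧) ^ (i : ℕ)) ∘ₗ
    (substAlgHom hg).toLinearMap ∘ₗ LinearMap.proj i

theorem twistedSubst_apply (hg : HasSubst g) (x : Fin n → R⟦X⟧) :
    twistedSubst n hg x = ∑ i : Fin n, (1 + X) ^ (i : ℕ) * (x i).subst g := by
  simp [twistedSubst, coe_substAlgHom]

theorem twistedSubst_X_mul (hg : HasSubst g) (x : Fin n → R⟦X⟧) :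
    twistedSubst n hg (fun i ↦ X * x i) = g * twistedSubst n hg x := by
  simp only [twistedSubst_apply, subst_mul hg, subst_X hg, Finset.mul_sum]
  exact Finset.sum_congr rfl fun i _ ↦ by ring

theorem map_twistedSubst_eq {S : Type*} [CommRing S] (h : R →+* S) {g₁ g₂ : R⟦X⟧}
    (hg₁ : HasSubst g₁) (hg₂ : HasSubst g₂) (hmap : map h g₁ = map h g₂)
    (x : Fin n → R⟦X⟧) : map h (twistedSubst n hg₁ x) = map h (twistedSubst n hg₂ x) := by
  have hsubst (g : R⟦X⟧) (hg : HasSubst g) (f : R⟦X⟧) :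
      map h (f.subst g) = (map h f).subst (map h g) := map_subst hg f
  simp only [twistedSubst_apply, map_sum, map_mul, hsubst _ hg₁, hsubst _ hg₂, hmap]

variable (R) in
def binomialMatrix : Matrix (Fin n) (Fin n) R := Matrix.of fun r i ↦ ((i : ℕ).choose r : R)

theorem det_binomialMatrix : (binomialMatrix R n).det = 1 := by
  rw [Matrix.det_of_isUpperTriangular]
  · simp [binomialMatrix]
  · intro r i hir
    simp [binomialMatrix, Nat.choose_eq_zero_of_lt (show (i : ℕ) < r from hir)]

variable {n}

theorem coeff_twistedSubst_X_pow (hn : n ≠ 0) (x : Fin n → R⟦X⟧) (k : ℕ) (r : Fin n) :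
    coeff (n * k + r) (twistedSubst n (HasSubst.X_pow hn) x) =
      (binomialMatrix R n *ᵥ fun i ↦ coeff k (x i)) r := by
  rw [twistedSubst_apply, map_sum]
  refine Finset.sum_congr rfl fun i _ ↦ ?_
  have hdeg : ((1 + Polynomial.X : Polynomial R) ^ (i : ℕ)).natDegree < n := by
    have : ((1 + Polynomial.X : Polynomial R) ^ (i : ℕ)).natDegree ≤ i := by compute_degree!
    omega
  have := coeff_coe_mul_subst_X_pow hdeg r.isLt (x i) k
  push_cast at this
  rw [this, Polynomial.coeff_one_add_X_pow]
  rfl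

theorem ext_coeff_mul_add (hn : n ≠ 0) {f g : R⟦X⟧}
    (h : ∀ k, ∀ r : Fin n, coeff (n * k + r) f = coeff (n * k + r) g) : f = g := by
  ext d
  rw [← Nat.div_add_mod d n]
  exact h (d / n) ⟨d % n, Nat.mod_lt d (Nat.pos_of_ne_zero hn)⟩

-- `R⟦X⟧` is free over `R⟦Xⁿ⟧` on the basis `(1 + X)ⁱ`, `i < n`: the change of basis from
-- `Xʳ` is the unitriangular binomial matrix.
theorem twistedSubst_X_pow_bijective (hn : n ≠ 0) :
    Function.Bijective (twistedSubst n (R := R) (HasSubst.X_pow hn)) := by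
  have hB : IsUnit (binomialMatrix R n).det := by rw [det_binomialMatrix]; exact isUnit_one
  constructor
  · intro x y hxy
    have hcoeff (k : ℕ) : (fun i ↦ coeff k (x i)) = fun i ↦ coeff k (y i) := by
      have : binomialMatrix R n *ᵥ (fun i ↦ coeff k (x i)) =
          binomialMatrix R n *ᵥ (fun i ↦ coeff k (y i)) := by
        ext r
        rw [← coeff_twistedSubst_X_pow hn, ← coeff_twistedSubst_X_pow hn, hxy]
      simpa [Matrix.mulVec_mulVec, Matrix.nonsing_inv_mul _ hB] using
        congrArg ((binomialMatrix R n)⁻¹ *ᵥ ·) this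
    funext i
    ext k
    exact congrFun (hcoeff k) i
  · intro f
    refine ⟨fun i ↦ mk fun k ↦ ((binomialMatrix R n)⁻¹ *ᵥ fun r ↦ coeff (n * k + r) f) i,
      ext_coeff_mul_add hn fun k r ↦ ?_⟩
    rw [coeff_twistedSubst_X_pow hn]
    simp only [coeff_mk]
    rw [Matrix.mulVec_mulVec, Matrix.mul_nonsing_inv _ hB, Matrix.one_mulVec]

variable (R) in
theorem hasSubst_one_add_X_pow_sub_one (n : ℕ) : HasSubst ((1 + X : R⟦X⟧) ^ n - 1) :=
  HasSubst.of_constantCoeff_zero' (by simp)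

end PowerSeries

theorem Ideal.mul_mem_span_of_forall_mul_mem {R : Type*} [CommSemiring R] {a x : R}
    {S T : Set R} (h : ∀ s ∈ S, a * s ∈ Ideal.span T) (hx : x ∈ Ideal.span S) :
    a * x ∈ Ideal.span T :=
  (Submodule.span_le (p := Submodule.comap (LinearMap.mulLeft R a) (Ideal.span T))).mpr h hx

section SharpIdeal

variable (R : Type*) [CommRing R] (p : ℕ)

def sharpExponent (n j : ℕ) : ℕ := (((n : ℤ) - 1 - j * p) / ((p : ℤ) - 1)).toNat

noncomputable def sharpIdeal (n : ℕ) : Ideal R⟦X⟧ :=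
  Ideal.span ((fun j : ℕ ↦ X ^ j * (p : R⟦X⟧) ^ sharpExponent p n j) '' Set.Iic (n / p))

variable {R p}

theorem sharpExponent_add_self_succ (m j : ℕ) :
    sharpExponent p (m + p) (j + 1) = sharpExponent p m j := by
  unfold sharpExponent
  congr 2
  push_cast
  ring

theorem sharpExponent_add_self_le (hp : 1 < p) (m j : ℕ) :
    sharpExponent p (m + p) j ≤ sharpExponent p (m + 1) j + 1 := by
  unfold sharpExponent
  have : ((m + p : ℕ) : ℤ) - 1 - j * p = ((m + 1 : ℕ) : ℤ) - 1 - j * p + 1 * ((p : ℤ) - 1) := by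
    push_cast
    ring
  rw [this, Int.add_mul_ediv_right _ 1 (by omega)]
  omega

theorem sharpExponent_zero_of_lt (hp : 1 < p) {n : ℕ} (hn : n < p) : sharpExponent p n 0 = 0 := by
  unfold sharpExponent
  rw [Int.toNat_eq_zero, ← Int.lt_add_one_iff, zero_add, Int.ediv_lt_iff_lt_mul (by omega)]
  omega

theorem one_mem_sharpIdeal (hp : 1 < p) {n : ℕ} (hn : n < p) : 1 ∈ sharpIdeal R p n := by
  have : X ^ 0 * (p : R⟦X⟧) ^ sharpExponent p n 0 ∈ sharpIdeal R p n :=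
    Ideal.subset_span ⟨0, Nat.zero_le _, rfl⟩
  simpa [sharpExponent_zero_of_lt hp hn] using this

theorem X_mul_mem_sharpIdeal (hp : 0 < p) {m : ℕ} {x : R⟦X⟧} (hx : x ∈ sharpIdeal R p m) :
    X * x ∈ sharpIdeal R p (m + p) := by
  refine Ideal.mul_mem_span_of_forall_mul_mem ?_ hx
  rintro _ ⟨j, hj, rfl⟩
  refine Ideal.subset_span ⟨j + 1, ?_, ?_⟩
  · rw [Set.mem_Iic, Nat.add_div_right m hp]
    exact Nat.succ_le_succ hj
  · simp only [sharpExponent_add_self_succ]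
    ring

theorem natCast_mul_mem_sharpIdeal (hp : 1 < p) {m : ℕ} {x : R⟦X⟧}
    (hx : x ∈ sharpIdeal R p (m + 1)) : (p : R⟦X⟧) * x ∈ sharpIdeal R p (m + p) := by
  refine Ideal.mul_mem_span_of_forall_mul_mem ?_ hx
  rintro _ ⟨j, hj, rfl⟩
  have hle := sharpExponent_add_self_le hp m j
  have : (p : R⟦X⟧) * (X ^ j * (p : R⟦X⟧) ^ sharpExponent p (m + 1) j) =
      (p : R⟦X⟧) ^ (sharpExponent p (m + 1) j + 1 - sharpExponent p (m + p) j) *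
        (X ^ j * (p : R⟦X⟧) ^ sharpExponent p (m + p) j) := by
    calc _ = X ^ j * (p : R⟦X⟧) ^ (sharpExponent p (m + 1) j + 1) := by ring
      _ = _ := by rw [mul_left_comm, ← pow_add, Nat.sub_add_cancel hle]
  dsimp only
  rw [this]
  refine Ideal.mul_mem_left _ _ (Ideal.subset_span ⟨j, ?_, rfl⟩)
  exact (Set.mem_Iic.mp hj).trans (Nat.div_le_div_right (by omega))

end SharpIdeal

section Padic

variable (p : ℕ) [hp : Fact p.Prime]

instance PadicInt.isAdicComplete_span_p : IsAdicComplete (Ideal.span {(p : ℤ_[p])}) ℤ_[p] :=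
  PadicInt.maximalIdeal_eq_span_p (p := p) ▸ inferInstance

theorem PadicInt.ker_toZMod_eq_span_p :
    RingHom.ker (PadicInt.toZMod (p := p)) = Ideal.span {(p : ℤ_[p])} := by
  rw [PadicInt.ker_toZMod, PadicInt.maximalIdeal_eq_span_p]

theorem map_toZMod_one_add_X_pow_sub_one :
    map PadicInt.toZMod ((1 + X : ℤ_[p]⟦X⟧) ^ p - 1) = map PadicInt.toZMod (X ^ p) := by
  have : CharP (ZMod p)⟦X⟧ p :=
    charP_of_injective_algebraMap (algebraMap (ZMod p) (ZMod p)⟦X⟧).injective p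
  simp [add_pow_char]

theorem exists_one_add_X_pow_sub_one_eq :
    ∃ u : ℤ_[p]⟦X⟧, (1 + X) ^ p - 1 = X ^ p + (p : ℤ_[p]⟦X⟧) * (X * u) := by
  obtain ⟨v, hv⟩ := exists_smul_eq_of_map_eq_zero (PadicInt.ker_toZMod_eq_span_p p).le
    (F := (1 + X) ^ p - 1 - X ^ p)
    (by rw [map_sub, map_toZMod_one_add_X_pow_sub_one, sub_self])
  have hv0 : constantCoeff v = 0 := by
    simpa [hp.out.ne_zero] using congrArg constantCoeff hv
  obtain ⟨u, rfl⟩ := X_dvd_iff.mpr hv0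
  refine ⟨u, ?_⟩
  rw [← sub_eq_iff_eq_add', ← hv, Nat.cast_smul_eq_nsmul, nsmul_eq_mul]

local notation "Φ" => twistedSubst p (hasSubst_one_add_X_pow_sub_one ℤ_[p] p)

theorem twistedSubst_one_add_X_pow_sub_one_bijective : Function.Bijective Φ := by
  have hp0 := hp.out.ne_zero
  have hcongr (x : Fin p → ℤ_[p]⟦X⟧) :
      ∃ y, (p : ℤ_[p]) • y = Φ x - twistedSubst p (HasSubst.X_pow hp0) x :=
    exists_smul_eq_of_map_eq_zero (PadicInt.ker_toZMod_eq_span_p p).le (by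
      rw [map_sub, map_twistedSubst_eq p _ _ (HasSubst.X_pow hp0)
        (map_toZMod_one_add_X_pow_sub_one p), sub_self])
  have hreg : IsSMulRegular ℤ_[p]⟦X⟧ (p : ℤ_[p]) := fun a b hab ↦ by
    simp only [smul_eq_C_mul] at hab
    exact mul_left_cancel₀ ((map_ne_zero_iff _ C_injective).mpr PadicInt.prime_p.ne_zero) hab
  exact ⟨LinearMap.injective_of_sub_eq_smul hreg (twistedSubst_X_pow_bijective hp0) hcongr,
    LinearMap.surjective_of_sub_eq_smul (twistedSubst_X_pow_bijective hp0).2 hcongr⟩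

theorem mem_sharpIdeal_of_twistedSubst_eq (n : ℕ) :
    ∀ (f : ℤ_[p]⟦X⟧) (x : Fin p → ℤ_[p]⟦X⟧), Φ x = X ^ n * f → x 0 ∈ sharpIdeal ℤ_[p] p n := by
  induction n using Nat.strong_induction_on with
  | _ n ih =>
  intro f x hx
  have hp1 := hp.out.one_lt
  rcases lt_or_ge n p with hn | hn
  · rw [(Ideal.eq_top_iff_one _).mpr (one_mem_sharpIdeal hp1 hn)]
    trivial
  obtain ⟨m, rfl⟩ := Nat.exists_eq_add_of_le' hn
  have hΦ := twistedSubst_one_add_X_pow_sub_one_bijective p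
  obtain ⟨u, hu⟩ := exists_one_add_X_pow_sub_one_eq p
  obtain ⟨y, hy⟩ := hΦ.2 (X ^ m * f)
  obtain ⟨z, hz⟩ := hΦ.2 (X ^ (m + 1) * (u * f))
  have hxyz : x = (fun i ↦ X * y i) - (p : ℤ_[p]) • z := hΦ.1 (by
    rw [map_sub, map_smul, twistedSubst_X_mul, hx, hy, hz, hu, Nat.cast_smul_eq_nsmul,
      nsmul_eq_mul]
    ring)
  rw [hxyz, Pi.sub_apply, Pi.smul_apply, Nat.cast_smul_eq_nsmul, nsmul_eq_mul]
  exact Ideal.sub_mem _ (X_mul_mem_sharpIdeal hp.out.pos (ih m (by omega) f y hy))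
    (natCast_mul_mem_sharpIdeal hp1 (ih (m + 1) (by omega) _ z hz))

end Padic

/-- **Sharp Estimate I** (Theorem 3.4): if `X^n f = ∑_{i<p} (1+X)^i xᵢ((1+X)^p - 1)`
in `ℤ_p[[X]]`, then `x₀ = ψ(X^n f)` lies in the ideal generated by the elements
`X^j p^[(n-1-jp)/(p-1)]` for `0 ≤ j ≤ [n/p]`. -/
theorem sharp_estimate_I (p : ℕ) [hp : Fact p.Prime] (n : ℕ) (f : PowerSeries ℤ_[p])
    (x : Fin p → PowerSeries ℤ_[p])
    (hx : X ^ n * f =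
      ∑ i : Fin p, (1 + X) ^ (i : ℕ) * PowerSeries.subst' ((1 + X) ^ p - 1) (x i)) :
    x 0 ∈ Ideal.span ((fun j : ℕ => X ^ j *
        (p : PowerSeries ℤ_[p]) ^ ((((n : ℤ) - 1 - j * p) / ((p : ℤ) - 1)).toNat)) ''
      (Set.Iic (n / p))) := by
  refine mem_sharpIdeal_of_twistedSubst_eq p n f x ?_
  rw [hx, twistedSubst_apply]
  simp only [subst'_eq_subst (show constantCoeff ((1 + X : ℤ_[p]⟦X⟧) ^ p - 1) = 0 by simp)]
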